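/- Let H be a complex Hilbert space and X a unitary operator on H that preserves a finite Borel measure μ on 𝕋. Then for every t ∈ ℝ, X preserves the rotated measure μ_t defined by μ_t(Δ) := μ(e^{it}Δ) for Borel sets Δ ⊆ 𝕋. -/

import Mathlib

open MeasureTheory InnerProductSpace

noncomputable section

instance : MeasurableSpace Circle := borel Circle
instance : BorelSpace Circle := ⟨rfl⟩

/-- arc-length (Haar/Lebesgue) measure on the circle -/
def ell : Measure Circle := Measure.map Circle.exp (volume.restrict (Set.Ioc 0 (2 * Real.pi)))

variable {K : Type*} [NormedAddCommGroup K] [InnerProductSpace ℂ K]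

/-- `ν` is the spectral measure of the pair `(U, ψ)`. -/
def IsSpectralMeasure (U : K ≃ₗᵢ[ℂ] K) (ψ : K) (ν : Measure Circle) : Prop :=
  IsFiniteMeasure ν ∧ ∀ n : ℤ, (inner ℂ ψ ((U ^ n) ψ) : ℂ) = ∫ z, (z : ℂ) ^ n ∂ν

open Classical in
/-- the spectral measure of the pair `(U, ψ)` -/
def specMeasure (U : K ≃ₗᵢ[ℂ] K) (ψ : K) : Measure Circle :=
  if h : ∃ ν, IsSpectralMeasure U ψ ν then h.choose else 0

/-- the set `H_μ(U)` -/
def specSet (μ : Measure Circle) (U : K ≃ₗᵢ[ℂ] K) : Set K :=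
  {ψ | specMeasure U ψ ≪ μ}

open Classical in
/-- the subspace `H_μ(U)` -/
def specSub (μ : Measure Circle) (U : K ≃ₗᵢ[ℂ] K) : Submodule ℂ K :=
  if h : ∃ S : Submodule ℂ K, (S : Set K) = specSet μ U then h.choose else ⊥

open Classical in
/-- the restriction `[U]_μ` of `U` to `H_μ(U)` -/
def restr (μ : Measure Circle) (U : K ≃ₗᵢ[ℂ] K) :
    (specSub μ U) ≃ₗᵢ[ℂ] (specSub μ U) :=
  if h : ∃ V : (specSub μ U) ≃ₗᵢ[ℂ] (specSub μ U), ∀ ψ : specSub μ U, (V ψ : K) = U ψ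
  then h.choose else LinearIsometryEquiv.refl ℂ _

/-- unitary equivalence of unitary operators on (possibly different) Hilbert spaces -/
def UnitarilyEquiv {K₁ K₂ : Type*} [NormedAddCommGroup K₁] [InnerProductSpace ℂ K₁]
    [NormedAddCommGroup K₂] [InnerProductSpace ℂ K₂]
    (A : K₁ ≃ₗᵢ[ℂ] K₁) (B : K₂ ≃ₗᵢ[ℂ] K₂) : Prop :=
  ∃ V : K₁ ≃ₗᵢ[ℂ] K₂, ∀ x, V (A x) = B (V x)

/-- `X` preserves `μ` : for every unitary `U`, `[UX]_μ ≅ [U]_μ`. -/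
def Preserves (μ : Measure Circle) (X : K ≃ₗᵢ[ℂ] K) : Prop :=
  ∀ U : K ≃ₗᵢ[ℂ] K, UnitarilyEquiv (restr μ (X.trans U)) (restr μ U)


/-- The rotated measure `μ_t`, `μ_t(Δ) = μ(e^{it}Δ)`. -/
def rotMeasure (t : ℝ) (μ : Measure Circle) : Measure Circle :=
  Measure.map (fun z : Circle => Circle.exp (-t) * z) μ

/-!
Multiplying a unitary `U` by the scalar `c = e^{it}` rotates its spectral measures:
`μ^{cU}_ψ` is the image of `μ^U_ψ` under `z ↦ cz`, because both have moments `cⁿ⟨ψ, Uⁿψ⟩` and a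
finite measure on the circle is determined by its moments (the trigonometric polynomials are
dense by Stone–Weierstrass). Hence `H_{μ_t}(U) = H_μ(cU)` and `[U]_{μ_t} = c⁻¹ [cU]_μ`.
Since `c (UX) = (cU) X`, the hypothesis applied to `cU` gives
`[UX]_{μ_t} = c⁻¹ [(cU) X]_μ ≅ c⁻¹ [cU]_μ = [U]_{μ_t}`.
-/

open scoped BoundedContinuousFunction

lemma BoundedContinuousFunction.integral_eq_of_mem_span {X 𝕜 : Type*} [TopologicalSpace X]
    [MeasurableSpace X] [OpensMeasurableSpace X] [RCLike 𝕜] {ν ν' : Measure X}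
    [IsFiniteMeasure ν] [IsFiniteMeasure ν'] {s : Set (X →ᵇ 𝕜)}
    (h : ∀ f ∈ s, ∫ x, f x ∂ν = ∫ x, f x ∂ν') {g : X →ᵇ 𝕜} (hg : g ∈ Submodule.span 𝕜 s) :
    ∫ x, g x ∂ν = ∫ x, g x ∂ν' := by
  induction hg using Submodule.span_induction with
  | mem f hf => exact h f hf
  | zero => simp
  | add f g _ _ hf hg =>
    simp only [coe_add, Pi.add_apply]
    rw [integral_add (f.integrable ν) (g.integrable ν),
      integral_add (f.integrable ν') (g.integrable ν'), hf, hg]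
  | smul c f _ hf => simp only [coe_smul, integral_smul, hf]

lemma MeasurableEquiv.map_absolutelyContinuous_iff {α β : Type*} [MeasurableSpace α]
    [MeasurableSpace β] (e : α ≃ᵐ β) {ν : Measure α} {μ : Measure β} :
    ν.map e ≪ μ ↔ ν ≪ μ.map e.symm := by
  refine ⟨fun h => ?_, fun h => ?_⟩
  · simpa only [e.map_symm_map] using h.map e.symm.measurable
  · simpa only [e.map_map_symm] using h.map e.measurable

namespace Circle

def monomial (n : ℤ) : Circle →ᵇ ℂ :=
  .mkOfCompact ⟨fun z => ((z ^ n : Circle) : ℂ), continuous_subtype_val.comp (continuous_zpow n)⟩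

@[simp] lemma monomial_apply (n : ℤ) (z : Circle) : monomial n z = (z : ℂ) ^ n := rfl

lemma monomial_add (m n : ℤ) : monomial (m + n) = monomial m * monomial n := by
  ext z
  simp [zpow_add₀ (coe_ne_zero z)]

lemma monomial_zero : monomial 0 = 1 := by
  ext z
  simp

lemma star_monomial (n : ℤ) : star (monomial n) = monomial (-n) := by
  ext z
  simp [← coe_inv_eq_conj]

lemma adjoin_monomial_one_le_span :
    Subalgebra.toSubmodule (StarAlgebra.adjoin ℂ {monomial 1}).toSubalgebra ≤
      Submodule.span ℂ (Set.range monomial) := by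
  rw [StarAlgebra.adjoin_eq_span]
  refine Submodule.span_mono fun f hf => ?_
  induction hf using Submonoid.closure_induction with
  | mem f hf =>
    rcases hf with rfl | hf
    · exact ⟨1, rfl⟩
    · rw [Set.star_singleton, Set.mem_singleton_iff] at hf
      exact ⟨-1, by rw [hf, star_monomial]⟩
  | one => exact ⟨0, monomial_zero⟩
  | mul f g _ _ hf hg =>
    obtain ⟨⟨m, rfl⟩, ⟨n, rfl⟩⟩ := And.intro hf hg
    exact ⟨m + n, monomial_add m n⟩

theorem measure_ext_of_moments {ν ν' : Measure Circle} [IsFiniteMeasure ν]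
    [IsFiniteMeasure ν'] (h : ∀ n : ℤ, ∫ z, (z : ℂ) ^ n ∂ν = ∫ z, (z : ℂ) ^ n ∂ν') :
    ν = ν' := by
  refine ext_of_forall_mem_subalgebra_integral_eq_of_polish
    (A := StarAlgebra.adjoin ℂ {monomial 1}) ?_ fun g hg => ?_
  · intro x y hxy
    refine ⟨_, ⟨_, ⟨monomial 1, StarAlgebra.self_mem_adjoin_singleton ℂ _, rfl⟩, rfl⟩, ?_⟩
    simpa [Circle.ext_iff] using hxy
  · refine BoundedContinuousFunction.integral_eq_of_mem_span ?_
      (adjoin_monomial_one_le_span hg)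
    rintro - ⟨n, rfl⟩
    simpa using h n

end Circle

def circleSMul : Circle →* (K ≃ₗᵢ[ℂ] K) where
  toFun c := ⟨DistribMulAction.toLinearEquiv ℂ K c, Circle.norm_smul c⟩
  map_one' := by ext x; exact one_smul Circle x
  map_mul' c d := by ext x; exact mul_smul c d x

@[simp] lemma circleSMul_apply (c : Circle) (x : K) : circleSMul c x = (c : ℂ) • x := rfl

lemma commute_circleSMul (c : Circle) (U : K ≃ₗᵢ[ℂ] K) : Commute (circleSMul c) U := by
  ext x
  simp

lemma circleSMul_mul_zpow (c : Circle) (U : K ≃ₗᵢ[ℂ] K) (n : ℤ) :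
    (circleSMul c * U) ^ n = circleSMul (c ^ n) * U ^ n := by
  rw [(commute_circleSMul c U).mul_zpow, map_zpow]

lemma IsSpectralMeasure.circleSMul_mul {U : K ≃ₗᵢ[ℂ] K} {ψ : K} {ν : Measure Circle}
    (h : IsSpectralMeasure U ψ ν) (c : Circle) :
    IsSpectralMeasure (circleSMul c * U) ψ (ν.map (c * ·)) := by
  have := h.1
  refine ⟨inferInstance, fun n => ?_⟩
  rw [circleSMul_mul_zpow, ← MeasurableEquiv.coe_mulLeft, integral_map_equiv,
    LinearIsometryEquiv.coe_mul, Function.comp_apply, circleSMul_apply,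
    inner_smul_right, h.2 n, ← integral_const_mul]
  simp only [MeasurableEquiv.coe_mulLeft, Circle.coe_mul, Circle.coe_zpow, mul_zpow]

lemma specMeasure_eq {U : K ≃ₗᵢ[ℂ] K} {ψ : K} {ν : Measure Circle}
    (h : IsSpectralMeasure U ψ ν) : specMeasure U ψ = ν := by
  have hex : ∃ ν, IsSpectralMeasure U ψ ν := ⟨ν, h⟩
  obtain ⟨_, hmom⟩ := hex.choose_spec
  have := h.1
  rw [specMeasure, dif_pos hex]
  exact Circle.measure_ext_of_moments fun n => by rw [← hmom, h.2]

lemma specMeasure_circleSMul_mul (U : K ≃ₗᵢ[ℂ] K) (ψ : K) (c : Circle) :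
    specMeasure (circleSMul c * U) ψ = (specMeasure U ψ).map (c * ·) := by
  by_cases hex : ∃ ν, IsSpectralMeasure U ψ ν
  · obtain ⟨ν, h⟩ := hex
    rw [specMeasure_eq h, specMeasure_eq (h.circleSMul_mul c)]
  · -- both sides are the junk value `0`
    have hex' : ¬∃ ν, IsSpectralMeasure (circleSMul c * U) ψ ν := by
      rintro ⟨ν, h⟩
      have h' := h.circleSMul_mul c⁻¹
      rw [map_inv, inv_mul_cancel_left] at h'
      exact hex ⟨_, h'⟩
    simp only [specMeasure, dif_neg hex, dif_neg hex', Measure.map_zero]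

lemma specMeasure_apply_self (U : K ≃ₗᵢ[ℂ] K) (ψ : K) :
    specMeasure U (U ψ) = specMeasure U ψ := by
  have hmom (n : ℤ) : inner ℂ (U ψ) ((U ^ n) (U ψ)) = inner ℂ ψ ((U ^ n) ψ) := by
    have hcomm : (U ^ n) (U ψ) = U ((U ^ n) ψ) := congr($((Commute.self_zpow U n).eq) ψ).symm
    rw [hcomm, LinearIsometryEquiv.inner_map_map]
  have hspec : IsSpectralMeasure U (U ψ) = IsSpectralMeasure U ψ := by
    ext ν
    simp only [IsSpectralMeasure, hmom]
  rw [specMeasure, specMeasure, hspec]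

lemma specSet_rotMeasure (t : ℝ) (μ : Measure Circle) (U : K ≃ₗᵢ[ℂ] K) :
    specSet (rotMeasure t μ) U = specSet μ (circleSMul (Circle.exp t) * U) := by
  ext ψ
  simp only [specSet, Set.mem_ofPred_eq, specMeasure_circleSMul_mul, rotMeasure,
    ← MeasurableEquiv.coe_mulLeft, MeasurableEquiv.map_absolutelyContinuous_iff,
    MeasurableEquiv.symm_mulLeft, Circle.exp_neg]

lemma specSub_rotMeasure (t : ℝ) (μ : Measure Circle) (U : K ≃ₗᵢ[ℂ] K) :
    specSub (rotMeasure t μ) U = specSub μ (circleSMul (Circle.exp t) * U) := by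
  rw [specSub, specSub, specSet_rotMeasure]

lemma map_specSub (μ : Measure Circle) (U : K ≃ₗᵢ[ℂ] K) :
    (specSub μ U).map (U.toLinearEquiv : K →ₗ[ℂ] K) = specSub μ U := by
  by_cases hex : ∃ S : Submodule ℂ K, (S : Set K) = specSet μ U
  · have hS : (specSub μ U : Set K) = specSet μ U := by
      rw [specSub, dif_pos hex]
      exact hex.choose_spec
    apply SetLike.coe_injective
    rw [Submodule.map_coe, hS]
    ext ψ
    constructor
    · rintro ⟨φ, hφ, rfl⟩
      show specMeasure U (U φ) ≪ μ
      rwa [specMeasure_apply_self]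
    · intro hψ
      refine ⟨U.symm ψ, ?_, U.apply_symm_apply ψ⟩
      show specMeasure U (U.symm ψ) ≪ μ
      rwa [← specMeasure_apply_self, U.apply_symm_apply]
  · rw [specSub, dif_neg hex, Submodule.map_bot]

lemma restr_apply (μ : Measure Circle) (U : K ≃ₗᵢ[ℂ] K) (ψ : specSub μ U) :
    (restr μ U ψ : K) = U ψ := by
  have hex : ∃ V : specSub μ U ≃ₗᵢ[ℂ] specSub μ U, ∀ ψ : specSub μ U, (V ψ : K) = U ψ :=
    ⟨⟨U.toLinearEquiv.ofSubmodules _ _ (map_specSub μ U), fun ψ => U.norm_map ψ⟩, fun _ => rfl⟩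
  rw [restr, dif_pos hex]
  exact hex.choose_spec ψ

namespace UnitarilyEquiv

variable {K₁ K₂ K₃ : Type*} [NormedAddCommGroup K₁] [InnerProductSpace ℂ K₁]
  [NormedAddCommGroup K₂] [InnerProductSpace ℂ K₂] [NormedAddCommGroup K₃]
  [InnerProductSpace ℂ K₃] {A : K₁ ≃ₗᵢ[ℂ] K₁} {B : K₂ ≃ₗᵢ[ℂ] K₂} {C : K₃ ≃ₗᵢ[ℂ] K₃}

theorem symm (h : UnitarilyEquiv A B) : UnitarilyEquiv B A := by
  obtain ⟨V, hV⟩ := h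
  exact ⟨V.symm, fun x => V.injective (by simp [hV])⟩

theorem trans (h₁ : UnitarilyEquiv A B) (h₂ : UnitarilyEquiv B C) : UnitarilyEquiv A C := by
  obtain ⟨V₁, hV₁⟩ := h₁
  obtain ⟨V₂, hV₂⟩ := h₂
  exact ⟨V₁.trans V₂, fun x => by simp [hV₁, hV₂]⟩

theorem circleSMul_mul (h : UnitarilyEquiv A B) (c : Circle) :
    UnitarilyEquiv (circleSMul c * A) (circleSMul c * B) := by
  obtain ⟨V, hV⟩ := h
  exact ⟨V, fun x => by simp [hV]⟩

end UnitarilyEquiv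

lemma unitarilyEquiv_restr_rotMeasure (t : ℝ) (μ : Measure Circle) (U : K ≃ₗᵢ[ℂ] K) :
    UnitarilyEquiv (restr (rotMeasure t μ) U)
      (circleSMul (Circle.exp t)⁻¹ * restr μ (circleSMul (Circle.exp t) * U)) := by
  refine ⟨LinearIsometryEquiv.ofEq _ _ (specSub_rotMeasure t μ U), fun ψ => Subtype.ext ?_⟩
  simp [restr_apply, -map_inv]

theorem preserves_rotMeasure_general {H : Type*} [NormedAddCommGroup H]
    [InnerProductSpace ℂ H]
    (μ : Measure Circle)
    (X : H ≃ₗᵢ[ℂ] H) (hX : Preserves μ X) (t : ℝ) :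
    Preserves (rotMeasure t μ) X := by
  intro U
  set c := Circle.exp t
  have hXU : X.trans (circleSMul c * U) = circleSMul c * X.trans U := rfl
  have h := (hX (circleSMul c * U)).circleSMul_mul c⁻¹
  rw [hXU] at h
  exact ((unitarilyEquiv_restr_rotMeasure t μ _).trans h).trans
    (unitarilyEquiv_restr_rotMeasure t μ U).symm

/-- If `X` preserves `μ`, then `X` preserves every rotated measure `μ_t`. -/
theorem preserves_rotMeasure {H : Type*} [NormedAddCommGroup H]
    [InnerProductSpace ℂ H] [CompleteSpace H]
    (μ : Measure Circle) [IsFiniteMeasure μ]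
    (X : H ≃ₗᵢ[ℂ] H) (hX : Preserves μ X) (t : ℝ) :
    Preserves (rotMeasure t μ) X :=
  preserves_rotMeasure_general μ X hX t

end
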